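/- arXiv:2405.17334 — 5 statements merged into one kernel-verified Lean document; each statement's English description precedes it below -/
import Mathlib

section
/- Let Q be continuous and strictly decreasing with q_ser < s. For any price p* with p_ser < p* < p̄_ser, there exists q* > q_ser such that p*·q* < p_mon·q_mon. -/
theorem exists_qstar (Q : ℝ → ℝ) (hQc : Continuous Q) (hQ : StrictAnti Q)
    (s p_mon : ℝ) (hs : 0 < s)
    (hpser_pos : 0 < p_mon * Q p_mon / s)
    (hqser_pos : 0 < Q (p_mon * Q p_mon / s))
    (hq : Q (p_mon * Q p_mon / s) < s)
    (pstar : ℝ)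
    (h1 : p_mon * Q p_mon / s < pstar)
    (h2 : pstar < (p_mon * Q p_mon / s) * s / Q (p_mon * Q p_mon / s)) :
    ∃ qstar : ℝ, Q (p_mon * Q p_mon / s) < qstar ∧ pstar * qstar < p_mon * Q p_mon := by
  set qser := Q (p_mon * Q p_mon / s) with hq_def
  have hpstar : 0 < pstar := lt_trans hpser_pos h1
  have hMs : (p_mon * Q p_mon / s) * s = p_mon * Q p_mon := by
    field_simp
  have hlt : pstar * qser < p_mon * Q p_mon := by
    have := (lt_div_iff₀ hqser_pos).mp h2
    rwa [hMs] at this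
  refine ⟨(qser + p_mon * Q p_mon / pstar) / 2, ?_, ?_⟩
  · have : qser < p_mon * Q p_mon / pstar := (lt_div_iff₀ hpstar).mpr (by linarith [mul_comm pstar qser])
    linarith
  · have h3 : pstar * (p_mon * Q p_mon / pstar) = p_mon * Q p_mon := by
      field_simp
    nlinarith [mul_pos hpstar hqser_pos]
end

section
/- In the quasi-patient dynamics, for all prices p < p' and all times t ≥ 1, the total demands satisfy D_t(p) - D_t(p') ≤ a_t · (Q(p) - Q(p')), where a_t = 1 + δ + ⋯ + δ^{t-1}. -/
theorem demand_diff_le (δ s : ℝ) (hδ0 : 0 ≤ δ) (hδ1 : δ ≤ 1)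
    (Q : ℝ → ℝ) (hQ : Antitone Q)
    (p q : ℕ → ℝ) (D Z : ℕ → ℝ → ℝ)
    (hZ0 : ∀ x, Z 0 x = 0)
    (hD : ∀ t, 1 ≤ t → ∀ x, D t x = δ * Z (t - 1) x + Q x)
    (hmax : ∀ t, 1 ≤ t → ∀ x, x * min s (D t x) ≤ p t * min s (D t (p t)))
    (hq : ∀ t, 1 ≤ t → q t = D t (p t))
    (hZle : ∀ t, 1 ≤ t → ∀ x, x ≤ p t → Z t x = D t x - q t)
    (hZgt : ∀ t, 1 ≤ t → ∀ x, p t < x → Z t x = 0) :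
    ∀ x x' : ℝ, x < x' → ∀ t, 1 ≤ t →
      D t x - D t x' ≤ (∑ i ∈ Finset.range t, δ ^ i) * (Q x - Q x') := by
  have hb : ∀ t, 0 ≤ ∑ i ∈ Finset.range t, δ ^ i := fun t =>
    Finset.sum_nonneg fun i _ => pow_nonneg hδ0 i
  -- main induction: the Z claim
  have hZ : ∀ t, ∀ x x' : ℝ, x ≤ x' →
      Z t x - Z t x' ≤ (∑ i ∈ Finset.range t, δ ^ i) * (Q x - Q x') := by
    intro t
    induction t with
    | zero =>
      intro x x' hxx
      simp only [hZ0]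
      have := mul_nonneg (hb 0) (sub_nonneg.2 (hQ hxx))
      linarith
    | succ n ih =>
      -- first establish the D claim at time n+1
      have hDc : ∀ x x' : ℝ, x ≤ x' →
          D (n+1) x - D (n+1) x' ≤ (∑ i ∈ Finset.range (n+1), δ ^ i) * (Q x - Q x') := by
        intro x x' hxx
        have h1 := hD (n+1) (Nat.le_add_left 1 n) x
        have h2 := hD (n+1) (Nat.le_add_left 1 n) x'
        simp only [Nat.add_sub_cancel] at h1 h2
        have hz := ih x x' hxx
        have := mul_le_mul_of_nonneg_left hz hδ0
        rw [geom_sum_succ]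
        nlinarith [sub_nonneg.2 (hQ hxx)]
      intro x x' hxx
      have ht1 : 1 ≤ n + 1 := Nat.le_add_left 1 n
      have hQd : 0 ≤ Q x - Q x' := sub_nonneg.2 (hQ hxx)
      rcases le_or_gt x' (p (n+1)) with h' | h'
      · rw [hZle (n+1) ht1 x (le_trans hxx h'), hZle (n+1) ht1 x' h']
        have := hDc x x' hxx
        linarith
      · rcases le_or_gt x (p (n+1)) with h | h
        · rw [hZle (n+1) ht1 x h, hZgt (n+1) ht1 x' h', hq (n+1) ht1]
          have h1 := hDc x (p (n+1)) h
          have h2 : Q (p (n+1)) - Q x' ≤ Q x - Q x' := by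
            have := hQ h
            linarith
          have h3 : Q x - Q (p (n+1)) ≤ Q x - Q x' := by
            have := hQ h'.le
            linarith
          have := mul_le_mul_of_nonneg_left h3 (hb (n+1))
          linarith
        · rw [hZgt (n+1) ht1 x h, hZgt (n+1) ht1 x' (h.trans_le hxx)]
          have := mul_nonneg (hb (n+1)) hQd
          linarith
  intro x x' hxx t ht
  obtain ⟨n, rfl⟩ := Nat.exists_eq_add_of_le ht
  have h1 := hD (1+n) ht x
  have h2 := hD (1+n) ht x'
  simp only [Nat.add_sub_cancel_left] at h1 h2
  have hz := hZ n x x' hxx.le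
  have := mul_le_mul_of_nonneg_left hz hδ0
  have hQd : 0 ≤ Q x - Q x' := sub_nonneg.2 (hQ hxx.le)
  rw [add_comm 1 n] at h1 h2 ⊢
  rw [geom_sum_succ]
  nlinarith
end

section
/- In the quasi-patient dynamics, if for all times t' with T < t' < t it holds that p_{t'} ≥ p' > p, and p_T ≤ p (or T = 0), then D_t(p) - D_t(p') = a_{t-T} · (Q(p) - Q(p')), where a_k = 1 + δ + ⋯ + δ^{k-1}. -/
theorem demand_diff_eq (δ s : ℝ) (hδ0 : 0 ≤ δ) (hδ1 : δ ≤ 1)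
    (Q : ℝ → ℝ) (hQ : Antitone Q)
    (p q : ℕ → ℝ) (D Z : ℕ → ℝ → ℝ)
    (hZ0 : ∀ x, Z 0 x = 0)
    (hD : ∀ t, 1 ≤ t → ∀ x, D t x = δ * Z (t - 1) x + Q x)
    (hmax : ∀ t, 1 ≤ t → ∀ x, x * min s (D t x) ≤ p t * min s (D t (p t)))
    (hq : ∀ t, 1 ≤ t → q t = D t (p t))
    (hZle : ∀ t, 1 ≤ t → ∀ x, x ≤ p t → Z t x = D t x - q t)
    (hZgt : ∀ t, 1 ≤ t → ∀ x, p t < x → Z t x = 0) :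
    ∀ (T t : ℕ) (x x' : ℝ), x < x' → T < t →
      (T = 0 ∨ p T ≤ x) →
      (∀ t', T < t' → t' < t → x' ≤ p t') →
      D t x - D t x' = (∑ i ∈ Finset.range (t - T), δ ^ i) * (Q x - Q x') := by
  intro T t x x' hxx' hTt hT
  induction t, hTt using Nat.le_induction with
  | base =>
    intro _
    have h1 : 1 ≤ T + 1 := Nat.le_add_left 1 T
    have hZx : Z T x = 0 := by
      rcases Nat.eq_zero_or_pos T with h0 | hpos
      · rw [h0, hZ0]
      · rcases hT with h0 | hle
        · rw [h0, hZ0]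
        · rcases lt_or_eq_of_le hle with h | h
          · exact hZgt T hpos x h
          · rw [hZle T hpos x h.ge, hq T hpos, ← h]
            ring
    have hZx' : Z T x' = 0 := by
      rcases Nat.eq_zero_or_pos T with h0 | hpos
      · rw [h0, hZ0]
      · rcases hT with h0 | hle
        · rw [h0, hZ0]
        · exact hZgt T hpos x' (lt_of_le_of_lt hle hxx')
    rw [hD (T+1) h1 x, hD (T+1) h1 x', Nat.add_sub_cancel, hZx, hZx']
    have h2 : T.succ - T = 1 := by omega
    rw [h2]
    simp
  | succ n hn ih =>
    intro hmid
    have hn1 : 1 ≤ n := le_trans (Nat.le_add_left 1 T) hn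
    have hpn : x' ≤ p n := hmid n hn (Nat.lt_succ_self n)
    have hZx : Z n x = D n x - q n := hZle n hn1 x (le_of_lt (lt_of_lt_of_le hxx' hpn))
    have hZx' : Z n x' = D n x' - q n := hZle n hn1 x' hpn
    have key := ih (fun t' h1 h2 => hmid t' h1 (h2.trans (Nat.lt_succ_self n)))
    have hsub : n.succ - T = (n - T) + 1 := by omega
    rw [hD (n+1) (by omega) x, hD (n+1) (by omega) x', Nat.add_sub_cancel, hZx, hZx',
      hsub, geom_sum_succ]
    linear_combination δ * key
end

section
/- For δ ∈ (0,1) and integer t ≥ 1, define p*_t = (1-δ)/(2(1-δ^t)) and F_t(p) = p·(a_t(1-p) - (a_t - 1)/2) - 1/4 with a_t = (1-δ^t)/(1-δ). Then F_t(p) < 0 for all p ∈ [0, p*_t), F_t(p*_t) = 0, and F_t(1/2) = 0. -/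
theorem lower_bound_function_roots (δ : ℝ) (hδ0 : 0 < δ) (hδ1 : δ < 1)
    (t : ℕ) (ht : 1 ≤ t) :
    (∀ p : ℝ, 0 ≤ p → p < (1 - δ) / (2 * (1 - δ ^ t)) →
        p * ((1 - δ ^ t) / (1 - δ) * (1 - p) - ((1 - δ ^ t) / (1 - δ) - 1) / 2) - 1 / 4 < 0) ∧
    ((1 - δ) / (2 * (1 - δ ^ t))) *
        ((1 - δ ^ t) / (1 - δ) * (1 - (1 - δ) / (2 * (1 - δ ^ t))) -
          ((1 - δ ^ t) / (1 - δ) - 1) / 2) - 1 / 4 = 0 ∧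
    (1 / 2 : ℝ) * ((1 - δ ^ t) / (1 - δ) * (1 - 1 / 2) -
          ((1 - δ ^ t) / (1 - δ) - 1) / 2) - 1 / 4 = 0 := by
  have hd : (0:ℝ) < 1 - δ := by linarith
  have hs : (0:ℝ) < 1 - δ ^ t := by
    have := pow_lt_one₀ hδ0.le hδ1 (by omega : t ≠ 0)
    linarith
  refine ⟨?_, ?_, ?_⟩
  · intro p hp0 hp
    rw [lt_div_iff₀ (by positivity)] at hp
    have hdt : δ ^ t ≤ δ := by
      calc δ ^ t ≤ δ ^ 1 := pow_le_pow_of_le_one hδ0.le hδ1.le ht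
        _ = δ := pow_one δ
    have hphalf : p < 1 / 2 := by nlinarith
    have heq : p * ((1 - δ ^ t) / (1 - δ) * (1 - p) - ((1 - δ ^ t) / (1 - δ) - 1) / 2) - 1 / 4
        = -(1 / (1 - δ)) * (((1 - δ ^ t) * p - (1 - δ) / 2) * (p - 1 / 2)) := by
      field_simp
      ring
    rw [heq]
    have hX : 0 < ((1 - δ ^ t) * p - (1 - δ) / 2) * (p - 1 / 2) :=
      mul_pos_of_neg_of_neg (by nlinarith) (by linarith)
    have := mul_pos (one_div_pos.mpr hd) hX
    linarith
  · field_simp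
    ring
  · field_simp
    ring
end

section
/- Fix ε > 0 and δ ∈ (0,1) with ε < (1-δ)/2. Define a_t = (1-δ^t)/(1-δ) and F_t(p) = p·(a_t(1/2 + ε - 2εp) - (a_t-1)/2) - 1/4. Then the nonzero root p*_t = (δ-1)/(4δ^t ε - 4ε) of F_t (besides p = 1/2) satisfies p*_t > 1/2 for all t ≥ 1, hence F_t(p) < 0 for all p < 1/2. -/
theorem collapse_to_pmon (ε δ : ℝ) (hε : 0 < ε) (hδ0 : 0 < δ) (hδ1 : δ < 1)
    (hεδ : ε < (1 - δ) / 2) :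
    ∀ t : ℕ, 1 ≤ t →
      (δ - 1) / (4 * δ ^ t * ε - 4 * ε) > 1 / 2 ∧
      ∀ p : ℝ, p < 1 / 2 →
        p * ((1 - δ ^ t) / (1 - δ) * (1 / 2 + ε - 2 * ε * p) -
            ((1 - δ ^ t) / (1 - δ) - 1) / 2) - 1 / 4 < 0 := by
  intro t ht
  have hδt1 : δ ^ t < 1 := pow_lt_one₀ hδ0.le hδ1 (by omega)
  have hδt0 : 0 < δ ^ t := pow_pos hδ0 t
  have h1δ : 0 < 1 - δ := by linarith
  constructor
  · have hd : 4 * δ ^ t * ε - 4 * ε < 0 := by nlinarith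
    rw [gt_iff_lt, lt_div_iff_of_neg hd]
    nlinarith
  · intro p hp
    set A : ℝ := (1 - δ ^ t) / (1 - δ) with hA
    have hA0 : 0 < A := div_pos (by linarith) h1δ
    have hAeq : A * (1 - δ) = 1 - δ ^ t := div_mul_cancel₀ _ (ne_of_gt h1δ)
    have hAε : A * ε < 1 / 2 := by nlinarith
    have h3 : 2 * A * ε * p < 1 / 2 := by
      rcases le_or_gt p 0 with h | h
      · nlinarith [mul_nonneg (mul_nonneg hA0.le hε.le) (neg_nonneg.2 h)]
      · nlinarith
    nlinarith [mul_pos (show (0:ℝ) < 1/2 - p by linarith)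
      (show (0:ℝ) < 1/2 - 2*A*ε*p by linarith)]
end
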